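/- arXiv:1912.03774 — 2 statements merged into one kernel-verified Lean document; each statement's English description precedes it below -/
import Mathlib

section
/- Let $(G,\prec)$ be an ordered groupoid and $Q,R\subseteq G$ with $Q\prec p$ and $R\prec p$ for some $p\in G$ (i.e. every element of $Q$ and $R$ is $\prec$-below $p$). Then: $Q\perp R\iff \mathsf{s}[Q]\perp\mathsf{s}[R]$, $Q\mathrel{\mathsf{D}} R\iff\mathsf{s}[Q]\mathrel{\mathsf{D}}\mathsf{s}[R]$, and $Q\mathrel{\mathsf{C}} R\iff\mathsf{s}[Q]\mathrel{\mathsf{C}}\mathsf{s}[R]$, where $\mathsf{s}(q)=q^{-1}q$. -/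
/-- An algebraic groupoid: a type with a partially-defined multiplication
(given by a totalised operation `mul` together with a definedness predicate
`D`) and an inversion, satisfying the usual groupoid axioms.  Here
`p` and `q` are composable iff `s(p) = r(q)`, i.e. `p⁻¹p = qq⁻¹`. -/
structure AlgGroupoid (G : Type*) where
  mul : G → G → G
  inv : G → G
  D : G → G → Prop
  D_iff : ∀ p q, D p q ↔ mul (inv p) p = mul q (inv q)
  inv_inv : ∀ p, inv (inv p) = p
  assoc : ∀ p q r, D p q → D q r → mul (mul p q) r = mul p (mul q r)
  D_mul_left : ∀ p q r, D p q → D q r → D (mul p q) r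
  D_mul_right : ∀ p q r, D p q → D q r → D p (mul q r)
  mul_inv_mul : ∀ p q, D p q → mul (mul p q) (inv q) = p
  inv_mul_mul : ∀ p q, D p q → mul (inv p) (mul p q) = q

variable {G : Type*}

/-- The source `s(g) = g⁻¹g`. -/
def AlgGroupoid.src (Γ : AlgGroupoid G) (g : G) : G := Γ.mul (Γ.inv g) g

/-- The range `r(g) = gg⁻¹`. -/
def AlgGroupoid.rng (Γ : AlgGroupoid G) (g : G) : G := Γ.mul g (Γ.inv g)

/-- `(G, ≺)` is an ordered groupoid: `≺` is transitive, preserves products and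
inverses, and every `r ≺ pp⁻¹` is of the form `qq⁻¹` for some `q ≺ p`. -/
def IsOrderedGroupoid (Γ : AlgGroupoid G) (prec : G → G → Prop) : Prop :=
  Transitive prec ∧
  (∀ p p' q q' : G, prec p' p → prec q' q → Γ.D p q → Γ.D p' q' →
    prec (Γ.mul p' q') (Γ.mul p q)) ∧
  (∀ p q : G, prec q p → prec (Γ.inv q) (Γ.inv p)) ∧
  (∀ p r : G, prec r (Γ.rng p) → ∃ q, prec q p ∧ r = Γ.rng q)

/-- `p^≻`: the set of elements strictly below `p`. -/
def dnSet (prec : G → G → Prop) (p : G) : Set G := {q | prec q p}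

/-- `Q^≻`: the set of elements below some element of `Q`. -/
def blwSet (prec : G → G → Prop) (Q : Set G) : Set G := {p | ∃ q ∈ Q, prec p q}

/-- `Q^≺`: the set of elements above some element of `Q`. -/
def abvSet (prec : G → G → Prop) (Q : Set G) : Set G := {p | ∃ q ∈ Q, prec q p}

/-- `Q ≺ R` as subsets. -/
def refines (prec : G → G → Prop) (Q R : Set G) : Prop := ∀ q ∈ Q, ∃ r ∈ R, prec q r

/-- Dense cover relation `Q D R`. -/
def dCov (prec : G → G → Prop) (Q R : Set G) : Prop :=
  ∀ q ∈ blwSet prec Q, ∃ r ∈ blwSet prec R, prec r q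

/-- Compact cover relation `Q C R`. -/
def cCov (prec : G → G → Prop) (Q R : Set G) : Prop :=
  ∃ F : Finset G, dCov prec Q ↑F ∧ refines prec ↑F R

namespace AlgGroupoid

variable (Γ : AlgGroupoid G)

lemma D_self_inv (a : G) : Γ.D a (Γ.inv a) := by
  rw [Γ.D_iff, Γ.inv_inv]

lemma D_inv_self (a : G) : Γ.D (Γ.inv a) a := by
  rw [Γ.D_iff, Γ.inv_inv]

lemma src_mul {a b : G} (hab : Γ.D a b) : Γ.src (Γ.mul a b) = Γ.src b := by
  have h1 := Γ.D_mul_left a b (Γ.inv b) hab (Γ.D_self_inv b)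
  have h2 := (Γ.D_iff _ _).mp h1
  rw [Γ.inv_inv] at h2
  exact h2

lemma rng_mul {a b : G} (hab : Γ.D a b) : Γ.rng (Γ.mul a b) = Γ.rng a := by
  have h1 := Γ.D_mul_right (Γ.inv a) a b (Γ.D_inv_self a) hab
  have h2 := (Γ.D_iff _ _).mp h1
  rw [Γ.inv_inv] at h2
  exact h2.symm

lemma inv_mul {a b : G} (hab : Γ.D a b) :
    Γ.inv (Γ.mul a b) = Γ.mul (Γ.inv b) (Γ.inv a) := by
  have hd : Γ.D (Γ.inv b) (Γ.inv a) := by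
    rw [Γ.D_iff, Γ.inv_inv, Γ.inv_inv]
    exact ((Γ.D_iff a b).mp hab).symm
  have hda : Γ.D (Γ.mul (Γ.inv b) (Γ.inv a)) a := Γ.D_mul_left _ _ _ hd (Γ.D_inv_self a)
  have hdc : Γ.D (Γ.mul (Γ.inv b) (Γ.inv a)) (Γ.mul a b) := Γ.D_mul_right _ _ _ hda hab
  have e1 : Γ.mul (Γ.mul (Γ.inv b) (Γ.inv a)) a = Γ.inv b := by
    have := Γ.mul_inv_mul (Γ.inv b) (Γ.inv a) hd
    rwa [Γ.inv_inv] at this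
  have e2 : Γ.mul (Γ.mul (Γ.inv b) (Γ.inv a)) (Γ.mul a b) = Γ.mul (Γ.inv b) b := by
    rw [← Γ.assoc _ a b hda hab, e1]
  have e3 := Γ.mul_inv_mul _ _ hdc
  rw [e2] at e3
  have e4 : Γ.mul (Γ.inv (Γ.mul a b)) (Γ.mul a b) = Γ.mul (Γ.inv b) b := Γ.src_mul hab
  rw [← e4] at e3
  have e5 := Γ.mul_inv_mul (Γ.inv (Γ.mul a b)) (Γ.mul a b) (Γ.D_inv_self _)
  rw [e5] at e3
  exact e3

variable {prec : G → G → Prop}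

lemma src_prec (h : IsOrderedGroupoid Γ prec) {a b : G} (hab : prec a b) :
    prec (Γ.src a) (Γ.src b) :=
  h.2.1 (Γ.inv b) (Γ.inv a) b a (h.2.2.1 _ _ hab) hab (Γ.D_inv_self b) (Γ.D_inv_self a)

/-- Restriction: any `e ≺ s(a)` is the source of some `x ≺ a`. -/
lemma restrict (h : IsOrderedGroupoid Γ prec) {a e : G} (he : prec e (Γ.src a)) :
    ∃ x, prec x a ∧ Γ.src x = e := by
  have hsr : Γ.rng (Γ.inv a) = Γ.src a := by
    show Γ.mul (Γ.inv a) (Γ.inv (Γ.inv a)) = _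
    rw [Γ.inv_inv]; rfl
  obtain ⟨w, hw, hew⟩ := h.2.2.2 (Γ.inv a) e (by rwa [hsr])
  refine ⟨Γ.inv w, ?_, ?_⟩
  · have := h.2.2.1 _ _ hw
    rwa [Γ.inv_inv] at this
  · show Γ.mul (Γ.inv (Γ.inv w)) (Γ.inv w) = e
    rw [Γ.inv_inv, hew]; rfl

/-- Elements below a common bound are determined by their source. -/
lemma src_inj (h : IsOrderedGroupoid Γ prec) {p x y : G}
    (hx : prec x p) (hy : prec y p) (hs : Γ.src x = Γ.src y) : x = y := by
  have hDxy : Γ.D x (Γ.inv y) := by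
    rw [Γ.D_iff, Γ.inv_inv]; exact hs
  have hDyx : Γ.D y (Γ.inv x) := by
    rw [Γ.D_iff, Γ.inv_inv]; exact hs.symm
  have hf : prec (Γ.mul x (Γ.inv y)) (Γ.rng p) :=
    h.2.1 p x (Γ.inv p) (Γ.inv y) hx (h.2.2.1 _ _ hy) (Γ.D_self_inv p) hDxy
  obtain ⟨w, hw, hfw⟩ := h.2.2.2 p _ hf
  have k1 : Γ.rng (Γ.mul x (Γ.inv y)) = Γ.rng x := Γ.rng_mul hDxy
  have k2 : Γ.rng (Γ.rng w) = Γ.rng w := Γ.rng_mul (Γ.D_self_inv w)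
  have key1 : Γ.mul x (Γ.inv y) = Γ.rng x := by
    rw [hfw] at k1
    rw [k2] at k1
    rw [hfw]
    exact k1
  have i2 : Γ.inv (Γ.rng x) = Γ.rng x := by
    show Γ.inv (Γ.mul x (Γ.inv x)) = _
    rw [Γ.inv_mul (Γ.D_self_inv x), Γ.inv_inv]
    rfl
  have key2 : Γ.mul y (Γ.inv x) = Γ.rng x := by
    have i1 : Γ.inv (Γ.mul x (Γ.inv y)) = Γ.mul y (Γ.inv x) := by
      rw [Γ.inv_mul hDxy, Γ.inv_inv]
    rw [← i1, key1, i2]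
  have f1 : Γ.mul (Γ.mul y (Γ.inv x)) x = y := by
    have := Γ.mul_inv_mul y (Γ.inv x) hDyx
    rwa [Γ.inv_inv] at this
  have f2 : Γ.mul (Γ.rng x) x = x := by
    have := Γ.mul_inv_mul x (Γ.inv x) (Γ.D_self_inv x)
    rwa [Γ.inv_inv] at this
  rw [key2, f2] at f1
  exact f1

lemma prec_of_src_prec (h : IsOrderedGroupoid Γ prec) {p x y : G}
    (hx : prec x p) (hy : prec y p) (hs : prec (Γ.src x) (Γ.src y)) : prec x y := by
  obtain ⟨y', hy', hsy'⟩ := Γ.restrict h hs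
  have hxy' : x = y' := Γ.src_inj h hx (h.1 hy' hy) hsy'.symm
  rw [hxy']; exact hy'

end AlgGroupoid

open Classical in
/-- A choice of an element below `R` with prescribed source. -/
noncomputable def pick (Γ : AlgGroupoid G) (prec : G → G → Prop) (R : Set G) (f : G) : G :=
  if hf : ∃ y, (∃ r ∈ R, prec y r) ∧ Γ.src y = f then hf.choose else f

lemma pick_spec (Γ : AlgGroupoid G) (prec : G → G → Prop) (R : Set G) (f : G)
    (hf : ∃ y, (∃ r ∈ R, prec y r) ∧ Γ.src y = f) :
    (∃ r ∈ R, prec (pick Γ prec R f) r) ∧ Γ.src (pick Γ prec R f) = f := by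
  unfold pick
  rw [dif_pos hf]
  exact hf.choose_spec

/-- For subsets `Q, R` bounded by `p` in an ordered groupoid, the
relations `⊥`, `D`, `C` are reflected by taking sources. -/
theorem bounded_src_perp_dCov_cCov (Γ : AlgGroupoid G) (prec : G → G → Prop)
    (h : IsOrderedGroupoid Γ prec) (p : G) (Q R : Set G)
    (hQ : ∀ q ∈ Q, prec q p) (hR : ∀ r ∈ R, prec r p) :
    ((blwSet prec Q ∩ blwSet prec R = ∅) ↔
      (blwSet prec (Γ.src '' Q) ∩ blwSet prec (Γ.src '' R) = ∅)) ∧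
    (dCov prec Q R ↔ dCov prec (Γ.src '' Q) (Γ.src '' R)) ∧
    (cCov prec Q R ↔ cCov prec (Γ.src '' Q) (Γ.src '' R)) := by
  classical
  have hT : Transitive prec := h.1
  refine ⟨?_, ?_, ?_⟩
  · -- ⊥
    rw [Set.eq_empty_iff_forall_notMem, Set.eq_empty_iff_forall_notMem]
    constructor
    · rintro hP e ⟨⟨sq, ⟨q, hqQ, rfl⟩, heq⟩, ⟨sr, ⟨r, hrR, rfl⟩, her⟩⟩
      obtain ⟨x, hxq, hsx⟩ := Γ.restrict h heq
      obtain ⟨y, hyr, hsy⟩ := Γ.restrict h her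
      have hxy : x = y := Γ.src_inj h (hT hxq (hQ q hqQ)) (hT hyr (hR r hrR))
        (hsx.trans hsy.symm)
      exact hP x ⟨⟨q, hqQ, hxq⟩, ⟨r, hrR, hxy ▸ hyr⟩⟩
    · rintro hP x ⟨⟨q, hqQ, hxq⟩, ⟨r, hrR, hxr⟩⟩
      have hmq : Γ.src q ∈ Γ.src '' Q := ⟨q, hqQ, rfl⟩
      have hmr : Γ.src r ∈ Γ.src '' R := ⟨r, hrR, rfl⟩
      exact hP (Γ.src x) ⟨⟨Γ.src q, hmq, Γ.src_prec h hxq⟩,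
        ⟨Γ.src r, hmr, Γ.src_prec h hxr⟩⟩
  · -- D
    constructor
    · rintro hD e ⟨sq, ⟨q, hqQ, rfl⟩, heq⟩
      obtain ⟨x, hxq, hsx⟩ := Γ.restrict h heq
      obtain ⟨y, ⟨r, hrR, hyr⟩, hyx⟩ := hD x ⟨q, hqQ, hxq⟩
      have hmr : Γ.src r ∈ Γ.src '' R := ⟨r, hrR, rfl⟩
      exact ⟨Γ.src y, ⟨Γ.src r, hmr, Γ.src_prec h hyr⟩,
        hsx ▸ Γ.src_prec h hyx⟩
    · rintro hD x ⟨q, hqQ, hxq⟩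
      have hmq : Γ.src q ∈ Γ.src '' Q := ⟨q, hqQ, rfl⟩
      obtain ⟨e, ⟨sr, ⟨r, hrR, rfl⟩, her⟩, hex⟩ :=
        hD (Γ.src x) ⟨Γ.src q, hmq, Γ.src_prec h hxq⟩
      obtain ⟨y, hyr, hsy⟩ := Γ.restrict h her
      obtain ⟨z, hzx, hsz⟩ := Γ.restrict h hex
      have hzy : z = y := Γ.src_inj h (hT hzx (hT hxq (hQ q hqQ)))
        (hT hyr (hR r hrR)) (hsz.trans hsy.symm)
      exact ⟨z, ⟨r, hrR, hzy ▸ hyr⟩, hzx⟩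
  · -- C
    constructor
    · rintro ⟨F, hDF, hFR⟩
      refine ⟨F.image Γ.src, ?_, ?_⟩
      · rintro e ⟨sq, ⟨q, hqQ, rfl⟩, heq⟩
        obtain ⟨x, hxq, hsx⟩ := Γ.restrict h heq
        obtain ⟨y, ⟨f, hfF, hyf⟩, hyx⟩ := hDF x ⟨q, hqQ, hxq⟩
        refine ⟨Γ.src y, ⟨Γ.src f, ?_, Γ.src_prec h hyf⟩, hsx ▸ Γ.src_prec h hyx⟩
        simp only [Finset.coe_image, Set.mem_image, Finset.mem_coe]
        exact ⟨f, hfF, rfl⟩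
      · intro s hs
        simp only [Finset.coe_image, Set.mem_image, Finset.mem_coe] at hs
        obtain ⟨f, hfF, rfl⟩ := hs
        obtain ⟨r, hrR, hfr⟩ := hFR f hfF
        exact ⟨Γ.src r, ⟨r, hrR, rfl⟩, Γ.src_prec h hfr⟩
    · rintro ⟨F, hDF, hFs⟩
      -- each f ∈ F lies below the source of some r ∈ R; pick a lift
      have hg : ∀ f ∈ F, (∃ r ∈ R, prec (pick Γ prec R f) r) ∧
          Γ.src (pick Γ prec R f) = f := by
        intro f hfF
        obtain ⟨s, ⟨r, hrR, rfl⟩, hfs⟩ := hFs f hfF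
        obtain ⟨y, hyr, hsy⟩ := Γ.restrict h hfs
        exact pick_spec Γ prec R f ⟨y, ⟨r, hrR, hyr⟩, hsy⟩
      refine ⟨F.image (pick Γ prec R), ?_, ?_⟩
      · rintro x ⟨q, hqQ, hxq⟩
        have hmq : Γ.src q ∈ Γ.src '' Q := ⟨q, hqQ, rfl⟩
        obtain ⟨e, ⟨f, hfF, hef⟩, hex⟩ :=
          hDF (Γ.src x) ⟨Γ.src q, hmq, Γ.src_prec h hxq⟩
        have hfF' : f ∈ F := hfF
        obtain ⟨⟨r, hrR, hyr⟩, hsy⟩ := hg f hfF'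
        -- e ≺ f = src (pick f); restrict
        obtain ⟨w, hwy, hsw⟩ := Γ.restrict h (hsy ▸ hef)
        obtain ⟨z, hzx, hsz⟩ := Γ.restrict h hex
        have hwz : z = w := Γ.src_inj h (hT hzx (hT hxq (hQ q hqQ)))
          (hT hwy (hT hyr (hR r hrR))) (hsz.trans hsw.symm)
        refine ⟨z, ⟨pick Γ prec R f, ?_, hwz ▸ hwy⟩, hzx⟩
        simp only [Finset.coe_image, Set.mem_image, Finset.mem_coe]
        exact ⟨f, hfF', rfl⟩
      · intro y hy
        simp only [Finset.coe_image, Set.mem_image, Finset.mem_coe] at hy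
        obtain ⟨f, hfF, rfl⟩ := hy
        exact (hg f hfF).1
end

section
/- Let $(G,\prec)$ be an ordered groupoid. If $A\subseteq G$ is an atlas, then $A^\prec=\{g:\exists a\in A,\ a\prec g\}$ is a coset. -/
variable {G : Type*}

/-- The product of two subsets of a groupoid (restricted to defined products). -/
def setMul (Γ : AlgGroupoid G) (A B : Set G) : Set G :=
  {g | ∃ a ∈ A, ∃ b ∈ B, Γ.D a b ∧ g = Γ.mul a b}

/-- The inverse of a subset of a groupoid. -/
def setInv (Γ : AlgGroupoid G) (A : Set G) : Set G := Γ.inv '' A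

/-- `A` is unit-directed: `r[A]` and `s[A]` are down-directed, and `A` is
closed under the restrictions `a|ₛ₍b₎` and `ᵣ₍b₎|a` for `a, b ∈ A`. -/
def UnitDirected (Γ : AlgGroupoid G) (prec : G → G → Prop) (A : Set G) : Prop :=
  (∀ a ∈ A, ∀ b ∈ A, ∃ c ∈ A, prec (Γ.rng c) (Γ.rng a) ∧ prec (Γ.rng c) (Γ.rng b)) ∧
  (∀ a ∈ A, ∀ b ∈ A, ∃ c ∈ A, prec (Γ.src c) (Γ.src a) ∧ prec (Γ.src c) (Γ.src b)) ∧
  (∀ a ∈ A, ∀ b ∈ A, ∀ q, prec q a → Γ.src q = Γ.src b → q ∈ A) ∧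
  (∀ a ∈ A, ∀ b ∈ A, ∀ q, prec q a → Γ.rng q = Γ.rng b → q ∈ A)

/-- An atlas: a unit-directed set with `A A⁻¹ A ⊆ A`. -/
def IsAtlas (Γ : AlgGroupoid G) (prec : G → G → Prop) (A : Set G) : Prop :=
  UnitDirected Γ prec A ∧ setMul Γ (setMul Γ A (setInv Γ A)) A ⊆ A

/-- A coset: an atlas with `A^≺ ⊆ A`. -/
def IsCoset (Γ : AlgGroupoid G) (prec : G → G → Prop) (A : Set G) : Prop :=
  IsAtlas Γ prec A ∧ abvSet prec A ⊆ A


section AuxAtlas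

variable (Γ : AlgGroupoid G)

lemma AlgGroupoid.D_iff' (p q : G) : Γ.D p q ↔ Γ.src p = Γ.rng q := Γ.D_iff p q

lemma AlgGroupoid.rng_inv (p : G) : Γ.rng (Γ.inv p) = Γ.src p := by
  unfold AlgGroupoid.rng AlgGroupoid.src; rw [Γ.inv_inv]

lemma AlgGroupoid.src_inv (p : G) : Γ.src (Γ.inv p) = Γ.rng p := by
  unfold AlgGroupoid.rng AlgGroupoid.src; rw [Γ.inv_inv]

lemma AlgGroupoid.D_self_inv_s17 (p : G) : Γ.D p (Γ.inv p) := by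
  rw [Γ.D_iff', Γ.rng_inv]

lemma AlgGroupoid.D_inv_self_s17 (p : G) : Γ.D (Γ.inv p) p := by
  rw [Γ.D_iff', Γ.src_inv]

lemma AlgGroupoid.src_mul_s17 {p q : G} (h : Γ.D p q) : Γ.src (Γ.mul p q) = Γ.src q := by
  have h2 := Γ.D_mul_left p q (Γ.inv q) h (Γ.D_self_inv_s17 q)
  rw [Γ.D_iff', Γ.rng_inv] at h2; exact h2

lemma AlgGroupoid.rng_mul_s17 {p q : G} (h : Γ.D p q) : Γ.rng (Γ.mul p q) = Γ.rng p := by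
  have h2 := Γ.D_mul_right (Γ.inv p) p q (Γ.D_inv_self_s17 p) h
  rw [Γ.D_iff', Γ.src_inv] at h2; exact h2.symm

variable {prec : G → G → Prop}

lemma og_rng_mono (h : IsOrderedGroupoid Γ prec) {p q : G} (hpq : prec q p) : prec (Γ.rng q) (Γ.rng p) :=
  h.2.1 p q (Γ.inv p) (Γ.inv q) hpq (h.2.2.1 p q hpq) (Γ.D_self_inv_s17 p) (Γ.D_self_inv_s17 q)

lemma og_src_mono (h : IsOrderedGroupoid Γ prec) {p q : G} (hpq : prec q p) : prec (Γ.src q) (Γ.src p) :=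
  h.2.1 (Γ.inv p) (Γ.inv q) p q (h.2.2.1 p q hpq) hpq (Γ.D_inv_self_s17 p) (Γ.D_inv_self_s17 q)

lemma og_inv_mono (h : IsOrderedGroupoid Γ prec) {p q : G} (hpq : prec q p) : prec (Γ.inv q) (Γ.inv p) :=
  h.2.2.1 p q hpq

lemma og_corestrict (h : IsOrderedGroupoid Γ prec) {p r : G} (hr : prec r (Γ.rng p)) :
    ∃ q, prec q p ∧ Γ.rng q = r := by
  obtain ⟨q, hq, hq2⟩ := h.2.2.2 p r hr
  exact ⟨q, hq, hq2.symm⟩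

lemma og_restrict (h : IsOrderedGroupoid Γ prec) {p r : G} (hr : prec r (Γ.src p)) :
    ∃ q, prec q p ∧ Γ.src q = r := by
  rw [← Γ.rng_inv p] at hr
  obtain ⟨u, hu, hru⟩ := og_corestrict Γ h hr
  refine ⟨Γ.inv u, ?_, by rw [Γ.src_inv, hru]⟩
  have h2 := h.2.2.1 (Γ.inv p) u hu
  rwa [Γ.inv_inv] at h2

/-- Key lemma: restrictions are unique. -/
lemma og_uniq_src (h : IsOrderedGroupoid Γ prec) {x q a : G} (hq : prec q x) (ha : prec a x)
    (hs : Γ.src q = Γ.src a) : q = a := by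
  have hD : Γ.D q (Γ.inv a) := by rw [Γ.D_iff', Γ.rng_inv]; exact hs
  have htx : prec (Γ.mul q (Γ.inv a)) (Γ.rng x) :=
    h.2.1 x q (Γ.inv x) (Γ.inv a) hq (h.2.2.1 x a ha) (Γ.D_self_inv_s17 x) hD
  obtain ⟨w, hwx, hwt⟩ := og_corestrict Γ h htx
  have h1 : Γ.src (Γ.mul q (Γ.inv a)) = Γ.rng a := by
    rw [Γ.src_mul_s17 hD, Γ.src_inv]
  have h2 : Γ.src (Γ.rng w) = Γ.rng w := by
    show Γ.src (Γ.mul w (Γ.inv w)) = _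
    rw [Γ.src_mul_s17 (Γ.D_self_inv_s17 w), Γ.src_inv]
  have hwa : Γ.rng w = Γ.rng a := by rw [← h2, hwt, h1]
  have hD2 : Γ.D (Γ.inv w) a := by rw [Γ.D_iff', Γ.src_inv, hwa]
  have hq' : Γ.mul (Γ.mul q (Γ.inv a)) a = q := by
    have h3 := Γ.mul_inv_mul q (Γ.inv a) hD
    rwa [Γ.inv_inv] at h3
  calc q = Γ.mul (Γ.mul q (Γ.inv a)) a := hq'.symm
    _ = Γ.mul (Γ.mul w (Γ.inv w)) a := by rw [← hwt]; rfl
    _ = Γ.mul w (Γ.mul (Γ.inv w) a) := Γ.assoc w (Γ.inv w) a (Γ.D_self_inv_s17 w) hD2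
    _ = a := by
        have h4 := Γ.inv_mul_mul (Γ.inv w) a hD2
        rwa [Γ.inv_inv] at h4

lemma og_uniq_rng (h : IsOrderedGroupoid Γ prec) {x q a : G} (hq : prec q x) (ha : prec a x)
    (hs : Γ.rng q = Γ.rng a) : q = a := by
  have h1 : Γ.inv q = Γ.inv a := by
    refine og_uniq_src Γ h (h.2.2.1 x q hq) (h.2.2.1 x a ha) ?_
    rw [Γ.src_inv, Γ.src_inv, hs]
  have h2 := congrArg Γ.inv h1
  rwa [Γ.inv_inv, Γ.inv_inv] at h2

variable {A : Set G}

lemma atlas_restrict (h : IsOrderedGroupoid Γ prec) (hA : IsAtlas Γ prec A) {a c : G} (ha : a ∈ A) (hc : c ∈ A)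
    (hs : prec (Γ.src c) (Γ.src a)) : ∃ a', a' ∈ A ∧ prec a' a ∧ Γ.src a' = Γ.src c := by
  obtain ⟨q, hq, hqs⟩ := og_restrict Γ h hs
  exact ⟨q, hA.1.2.2.1 a ha c hc q hq hqs, hq, hqs⟩

lemma atlas_corestrict (h : IsOrderedGroupoid Γ prec) (hA : IsAtlas Γ prec A) {a c : G} (ha : a ∈ A) (hc : c ∈ A)
    (hs : prec (Γ.rng c) (Γ.rng a)) : ∃ a', a' ∈ A ∧ prec a' a ∧ Γ.rng a' = Γ.rng c := by
  obtain ⟨q, hq, hqs⟩ := og_corestrict Γ h hs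
  exact ⟨q, hA.1.2.2.2 a ha c hc q hq hqs, hq, hqs⟩

lemma atlas_subset_abv (h : IsOrderedGroupoid Γ prec) (hA : IsAtlas Γ prec A) : A ⊆ abvSet prec A := by
  intro a ha
  obtain ⟨c, hc, hc1, -⟩ := hA.1.2.1 a ha a ha
  obtain ⟨a', ha', ha'2, -⟩ := atlas_restrict Γ h hA ha hc hc1
  exact ⟨a', ha', ha'2⟩

end AuxAtlas

/-- In an ordered groupoid, if `A` is an atlas then `A^≺`
is a coset. -/
theorem atlas_up_coset (Γ : AlgGroupoid G) (prec : G → G → Prop)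
    (h : IsOrderedGroupoid Γ prec) (A : Set G) (hA : IsAtlas Γ prec A) :
    IsCoset Γ prec (abvSet prec A) := by
  obtain ⟨⟨hrd, hsd, hscl, hrcl⟩, hprod⟩ := hA
  have hA' : IsAtlas Γ prec A := ⟨⟨hrd, hsd, hscl, hrcl⟩, hprod⟩
  have hsub := atlas_subset_abv Γ h hA'
  refine ⟨⟨⟨?_, ?_, ?_, ?_⟩, ?_⟩, ?_⟩
  · -- rng-directed
    rintro x ⟨a, haA, hax⟩ y ⟨b, hbA, hby⟩
    obtain ⟨c, hcA, hc1, hc2⟩ := hrd a haA b hbA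
    exact ⟨c, hsub hcA, h.1 hc1 (og_rng_mono Γ h hax), h.1 hc2 (og_rng_mono Γ h hby)⟩
  · -- src-directed
    rintro x ⟨a, haA, hax⟩ y ⟨b, hbA, hby⟩
    obtain ⟨c, hcA, hc1, hc2⟩ := hsd a haA b hbA
    exact ⟨c, hsub hcA, h.1 hc1 (og_src_mono Γ h hax), h.1 hc2 (og_src_mono Γ h hby)⟩
  · -- src-closure
    rintro x ⟨a, haA, hax⟩ y ⟨b, hbA, hby⟩ q hqx hsq
    obtain ⟨c, hcA, hc1, hc2⟩ := hsd a haA b hbA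
    obtain ⟨a₁, ha₁A, ha₁a, ha₁s⟩ := atlas_restrict Γ h hA' haA hcA hc1
    have hcq : prec (Γ.src c) (Γ.src q) := by
      rw [hsq]; exact h.1 hc2 (og_src_mono Γ h hby)
    obtain ⟨q₂, hq₂q, hq₂s⟩ := og_restrict Γ h hcq
    have heq : q₂ = a₁ :=
      og_uniq_src Γ h (h.1 hq₂q hqx) (h.1 ha₁a hax) (by rw [hq₂s, ha₁s])
    exact ⟨q₂, by rw [heq]; exact ha₁A, hq₂q⟩
  · -- rng-closure
    rintro x ⟨a, haA, hax⟩ y ⟨b, hbA, hby⟩ q hqx hsq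
    obtain ⟨c, hcA, hc1, hc2⟩ := hrd a haA b hbA
    obtain ⟨a₁, ha₁A, ha₁a, ha₁s⟩ := atlas_corestrict Γ h hA' haA hcA hc1
    have hcq : prec (Γ.rng c) (Γ.rng q) := by
      rw [hsq]; exact h.1 hc2 (og_rng_mono Γ h hby)
    obtain ⟨q₂, hq₂q, hq₂s⟩ := og_corestrict Γ h hcq
    have heq : q₂ = a₁ :=
      og_uniq_rng Γ h (h.1 hq₂q hqx) (h.1 ha₁a hax) (by rw [hq₂s, ha₁s])
    exact ⟨q₂, by rw [heq]; exact ha₁A, hq₂q⟩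
  · -- product closure
    rintro g ⟨m, ⟨x, ⟨a, haA, hax⟩, y', ⟨y, ⟨b, hbA, hby⟩, rfl⟩, hDxy, rfl⟩,
      z, ⟨c, hcA, hcz⟩, hDmz, rfl⟩
    obtain ⟨d, hdA, hd1, hd2⟩ := hsd a haA b hbA
    obtain ⟨a₁, ha₁A, ha₁a, ha₁s⟩ := atlas_restrict Γ h hA' haA hdA hd1
    obtain ⟨b₁, hb₁A, hb₁b, hb₁s⟩ := atlas_restrict Γ h hA' hbA hdA hd2
    obtain ⟨e, heA, he1, he2⟩ := hrd b₁ hb₁A c hcA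
    obtain ⟨b₂, hb₂A, hb₂b₁, hb₂r⟩ := atlas_corestrict Γ h hA' hb₁A heA he1
    obtain ⟨c₂, hc₂A, hc₂c, hc₂r⟩ := atlas_corestrict Γ h hA' hcA heA he2
    have hsb₂ : prec (Γ.src b₂) (Γ.src a₁) := by
      rw [ha₁s, ← hb₁s]; exact og_src_mono Γ h hb₂b₁
    obtain ⟨a₂, ha₂A, ha₂a₁, ha₂s⟩ := atlas_restrict Γ h hA' ha₁A hb₂A hsb₂
    have hD1 : Γ.D a₂ (Γ.inv b₂) := by rw [Γ.D_iff', Γ.rng_inv]; exact ha₂s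
    have hD2 : Γ.D (Γ.mul a₂ (Γ.inv b₂)) c₂ := by
      rw [Γ.D_iff', Γ.src_mul_s17 hD1, Γ.src_inv, hb₂r, hc₂r]
    have hw : Γ.mul (Γ.mul a₂ (Γ.inv b₂)) c₂ ∈ A :=
      hprod ⟨Γ.mul a₂ (Γ.inv b₂), ⟨a₂, ha₂A, Γ.inv b₂, ⟨b₂, hb₂A, rfl⟩, hD1, rfl⟩,
        c₂, hc₂A, hD2, rfl⟩
    have ha₂x : prec a₂ x := h.1 ha₂a₁ (h.1 ha₁a hax)
    have hb₂y : prec (Γ.inv b₂) (Γ.inv y) := og_inv_mono Γ h (h.1 hb₂b₁ (h.1 hb₁b hby))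
    have hm : prec (Γ.mul a₂ (Γ.inv b₂)) (Γ.mul x (Γ.inv y)) :=
      h.2.1 x a₂ (Γ.inv y) (Γ.inv b₂) ha₂x hb₂y hDxy hD1
    have hg : prec (Γ.mul (Γ.mul a₂ (Γ.inv b₂)) c₂) (Γ.mul (Γ.mul x (Γ.inv y)) z) :=
      h.2.1 _ _ z c₂ hm (h.1 hc₂c hcz) hDmz hD2
    exact ⟨_, hw, hg⟩
  · -- upward closure
    rintro p ⟨q, ⟨a, haA, haq⟩, hqp⟩
    exact ⟨a, haA, h.1 haq hqp⟩
end
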